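/- arXiv:2302.12279 — 3 statements merged into one kernel-verified Lean document; each statement's English description precedes it below -/
import Mathlib

section
/- For a bipartite pure state |Ψ⟩ ∈ H_S ⊗ H_A and a rank-one projective measurement {Π_a = |φ_a⟩⟨φ_a|} on the ancilla (with {|φ_a⟩} an orthonormal basis of H_A), the daemonic ergotropy equals the energy of the reduced state: Σ_a p_a E(ρ_a^S) = Tr[H ρ^S], where ρ^S = Tr_A |Ψ⟩⟨Ψ|. -/
/-!
Measuring `|φ_a⟩` on the ancilla leaves the system in the unnormalised pure state
`ξ_a = ⟨φ_a|Ψ⟩`, with `p_a = ‖ξ_a‖²`. Since `H ≥ 0` has a zero eigenvector, a unitary turning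
`ξ_a` into a multiple of it shows that the passive energy of any pure state vanishes, so its
ergotropy is its energy. Ergotropy is positively homogeneous, hence `p_a E(ρ_a) = ⟨ξ_a|H|ξ_a⟩`,
and completeness of `{φ_a}` gives `∑_a |ξ_a⟩⟨ξ_a| = Tr_A |Ψ⟩⟨Ψ|`.
-/

open Matrix
open scoped ComplexOrder

/-- Energy of a state `ρ` with respect to Hamiltonian `H`: `Tr[Hρ]` (real part). -/
noncomputable def energy {d : ℕ} (H ρ : Matrix (Fin d) (Fin d) ℂ) : ℝ :=
  (Matrix.trace (H * ρ)).re

/-- Minimal energy achievable from `ρ` by unitaries (passive-state energy). -/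
noncomputable def passiveEnergy {d : ℕ} (H ρ : Matrix (Fin d) (Fin d) ℂ) : ℝ :=
  sInf {x : ℝ | ∃ U ∈ Matrix.unitaryGroup (Fin d) ℂ, x = energy H (U * ρ * Uᴴ)}

/-- Ergotropy: maximal work extractable by unitaries. -/
noncomputable def ergotropy {d : ℕ} (H ρ : Matrix (Fin d) (Fin d) ℂ) : ℝ :=
  energy H ρ - passiveEnergy H ρ

open Kronecker

/-- Partial trace over the ancilla (second factor). -/
noncomputable def ptraceA {dS dA : ℕ} (M : Matrix (Fin dS × Fin dA) (Fin dS × Fin dA) ℂ) :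
    Matrix (Fin dS) (Fin dS) ℂ :=
  Matrix.of fun i j => ∑ k : Fin dA, M (i, k) (j, k)

/-- Probability of outcome associated to the POVM element `P` on the ancilla. -/
noncomputable def outProb {dS dA : ℕ} (ρSA : Matrix (Fin dS × Fin dA) (Fin dS × Fin dA) ℂ)
    (P : Matrix (Fin dA) (Fin dA) ℂ) : ℝ :=
  (Matrix.trace (ρSA * ((1 : Matrix (Fin dS) (Fin dS) ℂ) ⊗ₖ P))).re

/-- Conditional (normalized) state of the system given the POVM element `P`. -/
noncomputable def condState {dS dA : ℕ} (ρSA : Matrix (Fin dS × Fin dA) (Fin dS × Fin dA) ℂ)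
    (P : Matrix (Fin dA) (Fin dA) ℂ) : Matrix (Fin dS) (Fin dS) ℂ :=
  (outProb ρSA P)⁻¹ • ptraceA (ρSA * ((1 : Matrix (Fin dS) (Fin dS) ℂ) ⊗ₖ P))

lemma OrthonormalBasis.exists_apply_eq {𝕜 E ι : Type*} [RCLike 𝕜] [NormedAddCommGroup E]
    [InnerProductSpace 𝕜 E] [FiniteDimensional 𝕜 E] [Fintype ι]
    (hcard : Module.finrank 𝕜 E = Fintype.card ι) (z : ι) {x : E} (hx : ‖x‖ = 1) :
    ∃ b : OrthonormalBasis ι 𝕜 E, b z = x := by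
  have hsingle : Orthonormal 𝕜 (({z} : Set ι).domRestrict fun _ => x) :=
    orthonormal_subsingleton_iff.mpr fun _ => hx
  obtain ⟨b, hb⟩ := hsingle.exists_orthonormalBasis_extension_of_card_eq hcard
  exact ⟨b, hb z rfl⟩

lemma OrthonormalBasis.exists_repr_eq_single {𝕜 E ι : Type*} [RCLike 𝕜] [NormedAddCommGroup E]
    [InnerProductSpace 𝕜 E] [FiniteDimensional 𝕜 E] [Fintype ι] [DecidableEq ι]
    (hcard : Module.finrank 𝕜 E = Fintype.card ι) (z : ι) {x : E} (hx : x ≠ 0) :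
    ∃ b : OrthonormalBasis ι 𝕜 E, b.repr x = EuclideanSpace.single z (‖x‖ : 𝕜) := by
  obtain ⟨b, hb⟩ := exists_apply_eq hcard z (norm_smul_inv_norm (𝕜 := 𝕜) hx)
  refine ⟨b, ?_⟩
  have hxb : x = (‖x‖ : 𝕜) • b z := by
    rw [hb, smul_smul, mul_inv_cancel₀ (by simpa using hx), one_smul]
  conv_lhs => rw [hxb, map_smul, b.repr_self]
  ext i
  simp [PiLp.single_apply, RCLike.real_smul_eq_coe_mul]

lemma exists_mem_unitaryGroup_mulVec_eq {𝕜 ι : Type*} [RCLike 𝕜] [Fintype ι] [DecidableEq ι]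
    {x y : EuclideanSpace 𝕜 ι} (hxy : ‖x‖ = ‖y‖) :
    ∃ U ∈ unitaryGroup ι 𝕜, U *ᵥ x.ofLp = y.ofLp := by
  by_cases hx : x = 0
  · refine ⟨1, one_mem _, ?_⟩
    rw [hx, norm_zero, eq_comm, norm_eq_zero] at hxy
    simp [hx, hxy]
  have hy : y ≠ 0 := norm_ne_zero_iff.mp (hxy ▸ norm_ne_zero_iff.mpr hx)
  obtain ⟨z, -⟩ : ∃ z : ι, x z ≠ 0 := by
    by_contra! h
    exact hx (by ext i; simp [h i])
  have hcard : Module.finrank 𝕜 (EuclideanSpace 𝕜 ι) = Fintype.card ι := finrank_euclideanSpace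
  obtain ⟨b, hb⟩ := OrthonormalBasis.exists_repr_eq_single hcard z hx
  obtain ⟨c, hc⟩ := OrthonormalBasis.exists_repr_eq_single hcard z hy
  set e := EuclideanSpace.basisFun ι 𝕜
  -- `U` turns `e`-coordinates into `b`-coordinates and reads them as `c`-coordinates; the
  -- `b`-coordinates of `x` are the `c`-coordinates of `y`.
  refine ⟨e.toBasis.toMatrix c * b.toBasis.toMatrix e, Submonoid.mul_mem _
    (e.toMatrix_orthonormalBasis_mem_unitary c) (b.toMatrix_orthonormalBasis_mem_unitary e), ?_⟩
  have hbc : ⇑(b.toBasis.repr x) = ⇑(c.toBasis.repr y) := by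
    ext i
    simp only [OrthonormalBasis.coe_toBasis_repr_apply, hb, hc, hxy]
  have he : ∀ w, ⇑(e.toBasis.repr w) = w.ofLp := fun _ => rfl
  have hb' := Module.Basis.toMatrix_mulVec_repr (b' := b.toBasis) (b := e.toBasis) x
  have hc' := Module.Basis.toMatrix_mulVec_repr (b' := e.toBasis) (b := c.toBasis) y
  simp only [OrthonormalBasis.coe_toBasis] at hb' hc'
  rw [← mulVec_mulVec, ← he x, hb', hbc, hc', he]

theorem sum_vecMulVec_star_eq_one {R n : Type*} [CommRing R] [StarRing R] [Fintype n]
    [DecidableEq n] (φ : n → n → R)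
    (hφ : ∀ a b, ∑ k, star (φ a k) * φ b k = if a = b then 1 else 0) :
    ∑ a, vecMulVec (star (φ a)) (φ a) = 1 := by
  have hrows : of φ * (of φ)ᴴ = 1 := by
    ext a b
    simp only [mul_apply, conjTranspose_apply, of_apply, one_apply, eq_comm (a := a), ← hφ b a,
      mul_comm]
  ext k m
  have hcols : (of φ)ᴴ * of φ = 1 := mul_eq_one_comm.mp hrows
  simpa [Matrix.sum_apply, vecMulVec_apply, mul_apply] using congr_fun₂ hcols k m

theorem vecMulVec_mulVec_star {R m n : Type*} [CommRing R] [StarRing R] [Fintype n]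
    (M : Matrix m n R) (x : n → R) :
    vecMulVec (M *ᵥ x) (star (M *ᵥ x)) = M * vecMulVec x (star x) * Mᴴ := by
  rw [mul_vecMulVec, vecMulVec_mul, star_mulVec]

section PartialTrace
variable {dS dA : ℕ}

theorem trace_ptraceA (M : Matrix (Fin dS × Fin dA) (Fin dS × Fin dA) ℂ) :
    trace (ptraceA M) = trace M := by
  simp [trace, ptraceA, Fintype.sum_prod_type]

theorem ptraceA_vecMulVec_self_star (Ψ : Fin dS × Fin dA → ℂ) :
    ptraceA (vecMulVec Ψ (star Ψ)) = of (Function.curry Ψ) * (of (Function.curry Ψ))ᴴ := by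
  ext i j
  simp [ptraceA, mul_apply, vecMulVec_apply]

theorem ptraceA_vecMulVec_mul_one_kronecker_vecMulVec (Ψ : Fin dS × Fin dA → ℂ)
    (φ : Fin dA → ℂ) :
    ptraceA (vecMulVec Ψ (star Ψ) * ((1 : Matrix (Fin dS) (Fin dS) ℂ) ⊗ₖ vecMulVec φ (star φ))) =
      vecMulVec (of (Function.curry Ψ) *ᵥ star φ) (star (of (Function.curry Ψ) *ᵥ star φ)) := by
  ext i j
  simp only [ptraceA, mul_apply, vecMulVec_apply, Pi.star_apply, kroneckerMap_apply, one_apply,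
    ite_mul, one_mul, zero_mul, mul_ite, mul_zero, Fintype.sum_prod_type, Finset.sum_ite_irrel,
    Finset.sum_const_zero, Finset.sum_ite_eq', Finset.mem_univ, ↓reduceIte, of_apply, mulVec,
    dotProduct, Function.curry_apply, star_sum, star_mul', star_star, Finset.mul_sum,
    Finset.sum_mul]
  rw [Finset.sum_comm]
  exact Finset.sum_congr rfl fun _ _ => Finset.sum_congr rfl fun _ _ => by ring

end PartialTrace

section Energy
variable {d : ℕ} (H : Matrix (Fin d) (Fin d) ℂ)

theorem energy_smul (r : ℝ) (ρ : Matrix (Fin d) (Fin d) ℂ) :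
    energy H (r • ρ) = r * energy H ρ := by
  rw [energy, energy, mul_smul_comm, trace_smul, Complex.smul_re, smul_eq_mul]

theorem energy_sum {ι : Type*} (s : Finset ι) (ρ : ι → Matrix (Fin d) (Fin d) ℂ) :
    energy H (∑ a ∈ s, ρ a) = ∑ a ∈ s, energy H (ρ a) := by
  simp only [energy, Finset.mul_sum, trace_sum, Complex.re_sum]

theorem energy_vecMulVec (ξ : Fin d → ℂ) :
    energy H (vecMulVec ξ (star ξ)) = (star ξ ⬝ᵥ H *ᵥ ξ).re := by
  rw [energy, mul_vecMulVec, trace_vecMulVec, dotProduct_comm]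

theorem passiveEnergy_smul {r : ℝ} (hr : 0 ≤ r) (ρ : Matrix (Fin d) (Fin d) ℂ) :
    passiveEnergy H (r • ρ) = r * passiveEnergy H ρ := by
  rw [passiveEnergy, passiveEnergy, ← smul_eq_mul, ← Real.sInf_smul_of_nonneg hr]
  congr 1
  ext x
  simp only [Set.mem_ofPred_eq, Set.mem_smul_set, Matrix.mul_smul, Matrix.smul_mul, energy_smul]
  constructor
  · rintro ⟨U, hU, rfl⟩
    exact ⟨_, ⟨U, hU, rfl⟩, rfl⟩
  · rintro ⟨_, ⟨U, hU, rfl⟩, rfl⟩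
    exact ⟨U, hU, rfl⟩

theorem ergotropy_smul {r : ℝ} (hr : 0 ≤ r) (ρ : Matrix (Fin d) (Fin d) ℂ) :
    ergotropy H (r • ρ) = r * ergotropy H ρ := by
  rw [ergotropy, ergotropy, energy_smul, passiveEnergy_smul H hr, mul_sub]

theorem mul_ergotropy_inv_trace_smul {ρ : Matrix (Fin d) (Fin d) ℂ} (hρ : ρ.PosSemidef) :
    (trace ρ).re * ergotropy H ((trace ρ).re⁻¹ • ρ) = ergotropy H ρ := by
  have htrace : trace ρ = (trace ρ).re := Complex.eq_re_of_ofReal_le hρ.trace_nonneg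
  rcases eq_or_ne (trace ρ).re 0 with hzero | hne
  · have hρ0 : ρ = 0 := hρ.trace_eq_zero_iff.mp (by rw [htrace, hzero, Complex.ofReal_zero])
    rw [hzero, zero_mul, hρ0, ← zero_smul ℝ (0 : Matrix (Fin d) (Fin d) ℂ),
      ergotropy_smul H le_rfl, zero_mul]
  · have hnonneg : 0 ≤ (trace ρ).re := (Complex.le_def.mp hρ.trace_nonneg).1
    rw [ergotropy_smul H (inv_nonneg.mpr hnonneg), mul_inv_cancel_left₀ hne]

theorem passiveEnergy_vecMulVec_eq_zero (hH : H.PosSemidef) {v : Fin d → ℂ} (hv : v ≠ 0)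
    (hker : H *ᵥ v = 0) (ξ : Fin d → ℂ) :
    passiveEnergy H (vecMulVec ξ (star ξ)) = 0 := by
  have hconj : ∀ U : Matrix (Fin d) (Fin d) ℂ,
      energy H (U * vecMulVec ξ (star ξ) * Uᴴ) = (star (U *ᵥ ξ) ⬝ᵥ H *ᵥ (U *ᵥ ξ)).re := by
    intro U
    rw [← vecMulVec_mulVec_star, energy_vecMulVec]
  apply le_antisymm
  · obtain ⟨U, hU, hUξ⟩ := exists_mem_unitaryGroup_mulVec_eq (x := WithLp.toLp 2 ξ)
      (y := ((‖WithLp.toLp 2 ξ‖ / ‖WithLp.toLp 2 v‖ : ℝ) : ℂ) • WithLp.toLp 2 v) (by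
        rw [norm_smul, Complex.norm_real, Real.norm_of_nonneg (by positivity), div_mul_cancel₀]
        simpa using hv)
    refine csInf_le ⟨0, ?_⟩ ⟨U, hU, ?_⟩
    · rintro x ⟨U, -, rfl⟩
      rw [hconj]
      exact hH.re_dotProduct_nonneg _
    · rw [hconj, hUξ]
      simp [mulVec_smul, hker]
  · refine le_csInf ⟨_, 1, one_mem _, rfl⟩ ?_
    rintro x ⟨U, -, rfl⟩
    rw [hconj]
    exact hH.re_dotProduct_nonneg _

theorem ergotropy_vecMulVec (hH : H.PosSemidef) {v : Fin d → ℂ} (hv : v ≠ 0)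
    (hker : H *ᵥ v = 0) (ξ : Fin d → ℂ) :
    ergotropy H (vecMulVec ξ (star ξ)) = energy H (vecMulVec ξ (star ξ)) := by
  rw [ergotropy, passiveEnergy_vecMulVec_eq_zero H hH hv hker, sub_zero]

end Energy

theorem outProb_mul_ergotropy_condState {dS dA : ℕ} (H : Matrix (Fin dS) (Fin dS) ℂ)
    {ρSA : Matrix (Fin dS × Fin dA) (Fin dS × Fin dA) ℂ} {P : Matrix (Fin dA) (Fin dA) ℂ}
    (hσ : (ptraceA (ρSA * ((1 : Matrix (Fin dS) (Fin dS) ℂ) ⊗ₖ P))).PosSemidef) :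
    outProb ρSA P * ergotropy H (condState ρSA P) =
      ergotropy H (ptraceA (ρSA * ((1 : Matrix (Fin dS) (Fin dS) ℂ) ⊗ₖ P))) := by
  rw [condState, outProb, ← trace_ptraceA, mul_ergotropy_inv_trace_smul H hσ]

theorem daemonic_ergotropy_pure_rankone_general {dS dA : ℕ}
    (H : Matrix (Fin dS) (Fin dS) ℂ) (hH : H.PosSemidef)
    (v : Fin dS → ℂ) (hv : v ≠ 0) (hker : H.mulVec v = 0)
    (Ψ : Fin dS × Fin dA → ℂ)
    (φ : Fin dA → Fin dA → ℂ)
    (hortho : ∀ a b, ∑ k, star (φ a k) * φ b k = if a = b then 1 else 0) :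
    ∑ a, outProb (Matrix.vecMulVec Ψ (star Ψ)) (Matrix.vecMulVec (φ a) (star (φ a))) *
        ergotropy H (condState (Matrix.vecMulVec Ψ (star Ψ))
          (Matrix.vecMulVec (φ a) (star (φ a)))) =
      energy H (ptraceA (Matrix.vecMulVec Ψ (star Ψ))) := by
  set M := of (Function.curry Ψ)
  calc _ = ∑ a, energy H (vecMulVec (M *ᵥ star (φ a)) (star (M *ᵥ star (φ a)))) := by
        refine Finset.sum_congr rfl fun a _ => ?_
        have hσ := ptraceA_vecMulVec_mul_one_kronecker_vecMulVec Ψ (φ a)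
        rw [outProb_mul_ergotropy_condState H (hσ ▸ posSemidef_vecMulVec_self_star _), hσ,
          ergotropy_vecMulVec H hH hv hker]
    _ = energy H (M * (∑ a, vecMulVec (star (φ a)) (φ a)) * Mᴴ) := by
        simp only [← energy_sum, vecMulVec_mulVec_star, star_star, Matrix.mul_sum, Matrix.sum_mul]
    _ = energy H (ptraceA (vecMulVec Ψ (star Ψ))) := by
        rw [sum_vecMulVec_star_eq_one φ hortho, Matrix.mul_one, ptraceA_vecMulVec_self_star]

/-- for a bipartite pure state and a rank-one projective measurement
on the ancilla, the daemonic ergotropy equals the energy of the reduced state. -/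
theorem daemonic_ergotropy_pure_rankone {dS dA : ℕ}
    (H : Matrix (Fin dS) (Fin dS) ℂ) (hH : H.PosSemidef)
    (v : Fin dS → ℂ) (hv : v ≠ 0) (hker : H.mulVec v = 0)
    (Ψ : Fin dS × Fin dA → ℂ) (hΨ : ∑ i, Complex.normSq (Ψ i) = 1)
    (φ : Fin dA → Fin dA → ℂ)
    (hortho : ∀ a b, ∑ k, star (φ a k) * φ b k = if a = b then 1 else 0) :
    ∑ a, outProb (Matrix.vecMulVec Ψ (star Ψ)) (Matrix.vecMulVec (φ a) (star (φ a))) *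
        ergotropy H (condState (Matrix.vecMulVec Ψ (star Ψ))
          (Matrix.vecMulVec (φ a) (star (φ a)))) =
      energy H (ptraceA (Matrix.vecMulVec Ψ (star Ψ))) :=
  daemonic_ergotropy_pure_rankone_general H hH v hv hker Ψ φ hortho
end

section
/- For any finite convex decomposition of a density matrix ρ = Σ_k p_k ρ_k into density matrices ρ_k with probabilities p_k ≥ 0 summing to 1, the average ergotropy is sandwiched between the ergotropy and the energy of ρ: E(ρ) ≤ Σ_k p_k E(ρ_k) ≤ Tr[Hρ]. -/
open Matrix
open scoped ComplexOrder

/-!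
Energy is linear in the state and unitary conjugation commutes with convex combinations, so
the passive energy, an infimum of linear functions of the state, is concave; hence the
ergotropy, energy minus passive energy, is convex. For `H ≥ 0` every conjugated state has
nonnegative energy, so the passive energy is nonnegative and ergotropy never exceeds energy.
-/

section

variable {d : ℕ} {H ρ : Matrix (Fin d) (Fin d) ℂ}

theorem energy_nonneg (hH : H.PosSemidef) (hρ : ρ.PosSemidef) : 0 ≤ energy H ρ := by
  obtain ⟨B, rfl⟩ : ∃ B : Matrix (Fin d) (Fin d) ℂ, H = Bᴴ * B := by
    open scoped MatrixOrder in
    simpa only [star_eq_conjTranspose] using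
      CStarAlgebra.nonneg_iff_eq_star_mul_self.mp hH.nonneg
  have hpos : 0 ≤ (B * ρ * Bᴴ).trace := (hρ.mul_mul_conjTranspose_same B).trace_nonneg
  rw [energy, trace_mul_cycle, trace_mul_cycle ρ Bᴴ B]
  exact (Complex.nonneg_iff.mp hpos).1

theorem energy_sum_smul {ι : Type*} (s : Finset ι) (H : Matrix (Fin d) (Fin d) ℂ) (p : ι → ℝ)
    (ρ : ι → Matrix (Fin d) (Fin d) ℂ) :
    energy H (∑ k ∈ s, p k • ρ k) = ∑ k ∈ s, p k * energy H (ρ k) := by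
  simp only [energy, Finset.mul_sum, trace_sum, Complex.re_sum, Matrix.mul_smul, trace_smul,
    Complex.smul_re, smul_eq_mul]

theorem passiveEnergy_le_energy_conj (hH : H.PosSemidef) (hρ : ρ.PosSemidef)
    {U : Matrix (Fin d) (Fin d) ℂ} (hU : U ∈ unitaryGroup (Fin d) ℂ) :
    passiveEnergy H ρ ≤ energy H (U * ρ * Uᴴ) := by
  refine csInf_le ⟨0, ?_⟩ ⟨U, hU, rfl⟩
  rintro x ⟨V, -, rfl⟩
  exact energy_nonneg hH (hρ.mul_mul_conjTranspose_same V)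

theorem passiveEnergy_nonneg (hH : H.PosSemidef) (hρ : ρ.PosSemidef) :
    0 ≤ passiveEnergy H ρ := by
  refine Real.sInf_nonneg ?_
  rintro x ⟨U, -, rfl⟩
  exact energy_nonneg hH (hρ.mul_mul_conjTranspose_same U)

theorem ergotropy_le_energy (hH : H.PosSemidef) (hρ : ρ.PosSemidef) :
    ergotropy H ρ ≤ energy H ρ :=
  sub_le_self _ (passiveEnergy_nonneg hH hρ)

end

section

variable {d : ℕ} {ι : Type*} (s : Finset ι) {H : Matrix (Fin d) (Fin d) ℂ} {p : ι → ℝ}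
  {ρ : ι → Matrix (Fin d) (Fin d) ℂ}

theorem sum_mul_passiveEnergy_le (hH : H.PosSemidef) (hp : ∀ k, 0 ≤ p k)
    (hρ : ∀ k, (ρ k).PosSemidef) :
    ∑ k ∈ s, p k * passiveEnergy H (ρ k) ≤ passiveEnergy H (∑ k ∈ s, p k • ρ k) := by
  refine le_csInf ⟨_, 1, one_mem _, rfl⟩ ?_
  rintro x ⟨U, hU, rfl⟩
  have hconj : U * (∑ k ∈ s, p k • ρ k) * Uᴴ = ∑ k ∈ s, p k • (U * ρ k * Uᴴ) := by
    simp only [Finset.mul_sum, Finset.sum_mul, Matrix.mul_smul, Matrix.smul_mul]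
  rw [hconj, energy_sum_smul]
  exact Finset.sum_le_sum fun k _ ↦
    mul_le_mul_of_nonneg_left (passiveEnergy_le_energy_conj hH (hρ k) hU) (hp k)

theorem ergotropy_sum_smul_le (hH : H.PosSemidef) (hp : ∀ k, 0 ≤ p k)
    (hρ : ∀ k, (ρ k).PosSemidef) :
    ergotropy H (∑ k ∈ s, p k • ρ k) ≤ ∑ k ∈ s, p k * ergotropy H (ρ k) := by
  simp only [ergotropy, mul_sub, Finset.sum_sub_distrib, energy_sum_smul]
  exact sub_le_sub_left (sum_mul_passiveEnergy_le s hH hp hρ) _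

theorem sum_mul_ergotropy_le_energy (hH : H.PosSemidef) (hp : ∀ k, 0 ≤ p k)
    (hρ : ∀ k, (ρ k).PosSemidef) :
    ∑ k ∈ s, p k * ergotropy H (ρ k) ≤ energy H (∑ k ∈ s, p k • ρ k) := by
  rw [energy_sum_smul]
  exact Finset.sum_le_sum fun k _ ↦
    mul_le_mul_of_nonneg_left (ergotropy_le_energy hH (hρ k)) (hp k)

end

theorem avg_ergotropy_sandwich_general {d n : ℕ}
    (H : Matrix (Fin d) (Fin d) ℂ) (hH : H.PosSemidef)
    (p : Fin n → ℝ) (hp : ∀ k, 0 ≤ p k)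
    (ρ : Fin n → Matrix (Fin d) (Fin d) ℂ)
    (hρ : ∀ k, (ρ k).PosSemidef) :
    ergotropy H (∑ k, p k • ρ k) ≤ ∑ k, p k * ergotropy H (ρ k) ∧
    ∑ k, p k * ergotropy H (ρ k) ≤ energy H (∑ k, p k • ρ k) :=
  ⟨ergotropy_sum_smul_le _ hH hp hρ, sum_mul_ergotropy_le_energy _ hH hp hρ⟩

/-- for any finite convex decomposition of a density matrix, the average
ergotropy is sandwiched between the ergotropy and the energy of the total state.
`H` has smallest eigenvalue `0` (PSD with a nontrivial kernel vector). -/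
theorem avg_ergotropy_sandwich {d n : ℕ}
    (H : Matrix (Fin d) (Fin d) ℂ) (hH : H.PosSemidef)
    (v : Fin d → ℂ) (hv : v ≠ 0) (hker : H.mulVec v = 0)
    (p : Fin n → ℝ) (hp : ∀ k, 0 ≤ p k) (hpsum : ∑ k, p k = 1)
    (ρ : Fin n → Matrix (Fin d) (Fin d) ℂ)
    (hρ : ∀ k, (ρ k).PosSemidef) (htr : ∀ k, (ρ k).trace = 1) :
    ergotropy H (∑ k, p k • ρ k) ≤ ∑ k, p k * ergotropy H (ρ k) ∧
    ∑ k, p k * ergotropy H (ρ k) ≤ energy H (∑ k, p k • ρ k) :=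
  avg_ergotropy_sandwich_general H hH p hp ρ hρ
end

section
/- For the driven-dissipative qubit with Lindblad generator L(ρ) = −iα[σ_x, ρ] + κ𝒟[σ_−]ρ, the steady-state ergotropy with respect to H_0 = (ω_0/2)(σ_z+1) equals 𝓔_ss = (ω_0 κ/2)·(√(16α² + κ²) − κ)/(8α² + κ²). -/
open Matrix
open scoped ComplexOrder

/-- Pauli matrices. -/
noncomputable def sigmaX : Matrix (Fin 2) (Fin 2) ℂ := !![0, 1; 1, 0]
noncomputable def sigmaY : Matrix (Fin 2) (Fin 2) ℂ := !![0, -Complex.I; Complex.I, 0]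
noncomputable def sigmaZ : Matrix (Fin 2) (Fin 2) ℂ := !![1, 0; 0, -1]

/-- Lowering operator `σ₋ = |g⟩⟨e|`. -/
noncomputable def sigmaMinus : Matrix (Fin 2) (Fin 2) ℂ := !![0, 0; 1, 0]

/-- Qubit Hamiltonian `H₀ = (ω₀/2)(σ_z + 1)`. -/
noncomputable def qubitH (ω₀ : ℝ) : Matrix (Fin 2) (Fin 2) ℂ :=
  (ω₀ / 2) • (sigmaZ + 1)

/-- Purity `μ(ρ) = Tr[ρ²]`. -/
noncomputable def purity (ρ : Matrix (Fin 2) (Fin 2) ℂ) : ℝ :=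
  (Matrix.trace (ρ * ρ)).re

/-- Lindblad generator of the driven-dissipative qubit:
`L(ρ) = -iα[σ_x, ρ] + κ(σ₋ρσ₊ − ½{σ₊σ₋, ρ})`. -/
noncomputable def lindblad (α κ : ℝ) (ρ : Matrix (Fin 2) (Fin 2) ℂ) :
    Matrix (Fin 2) (Fin 2) ℂ :=
  (-(Complex.I * α)) • (sigmaX * ρ - ρ * sigmaX) +
    (κ : ℂ) • (sigmaMinus * ρ * sigmaMinusᴴ -
      (1 / 2 : ℂ) • (sigmaMinusᴴ * sigmaMinus * ρ + ρ * (sigmaMinusᴴ * sigmaMinus)))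

/-! Unitary conjugation preserves the trace and the purity `Tr[ρ²]` of a qubit state, and a
Hermitian trace-one `M` with excited population `m = M₀₀` satisfies
`2 Tr[M²] - 1 = (2m - 1)² + 4|M₀₁|²`. Hence every point of the unitary orbit of `ρ` has
`2m ≥ 1 - √(2 Tr[ρ²] - 1)`, with equality at the diagonalisation that puts the smaller eigenvalue
first, so the passive energy is `(ω₀/2)(1 - √(2 Tr[ρ²] - 1))`. The steady state of the Lindblad
equation is unique and has Bloch vector `(0, 4ακ, -κ²)/(8α² + κ²)`, of length
`κ √(16α² + κ²)/(8α² + κ²)`. -/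

open Complex

lemma trace_unitary_conj {n : Type*} [Fintype n] [DecidableEq n] {U : Matrix n n ℂ}
    (hU : U ∈ unitaryGroup n ℂ) (A : Matrix n n ℂ) : (U * A * Uᴴ).trace = A.trace := by
  have hUU : Uᴴ * U = 1 := Matrix.mem_unitaryGroup_iff'.mp hU
  rw [trace_mul_cycle, hUU, Matrix.one_mul]

lemma purity_unitary_conj {U : Matrix (Fin 2) (Fin 2) ℂ} (hU : U ∈ unitaryGroup (Fin 2) ℂ)
    (ρ : Matrix (Fin 2) (Fin 2) ℂ) : purity (U * ρ * Uᴴ) = purity ρ := by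
  have hUU : Uᴴ * U = 1 := Matrix.mem_unitaryGroup_iff'.mp hU
  rw [purity, purity, ← trace_unitary_conj hU (ρ * ρ)]
  simp only [Matrix.mul_assoc, ← Matrix.mul_assoc Uᴴ U, hUU, Matrix.one_mul]

lemma purity_eq_of_isHermitian {M : Matrix (Fin 2) (Fin 2) ℂ} (hM : M.IsHermitian)
    (htr : M.trace = 1) :
    purity M = (M 0 0).re ^ 2 + (1 - (M 0 0).re) ^ 2 + 2 * normSq (M 0 1) := by
  have h10 : M 1 0 = star (M 0 1) := (hM.apply 1 0).symm
  have h11 : M 1 1 = 1 - M 0 0 := by rw [trace_fin_two] at htr; linear_combination htr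
  have h00 : (M 0 0).im = 0 := conj_eq_iff_im.mp (hM.apply 0 0)
  simp [purity, trace_fin_two, mul_apply, Fin.sum_univ_two, h10, h11, normSq_apply, h00]
  ring

lemma one_sub_sqrt_le_two_mul_re {M : Matrix (Fin 2) (Fin 2) ℂ} (hM : M.IsHermitian)
    (htr : M.trace = 1) : 1 - √(2 * purity M - 1) ≤ 2 * (M 0 0).re := by
  have hsq : (2 * (M 0 0).re - 1) ^ 2 ≤ 2 * purity M - 1 := by
    rw [purity_eq_of_isHermitian hM htr]
    nlinarith [normSq_nonneg (M 0 1)]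
  linarith [neg_abs_le (2 * (M 0 0).re - 1), Real.abs_le_sqrt hsq]

lemma sigmaX_mem_unitaryGroup : sigmaX ∈ unitaryGroup (Fin 2) ℂ := by
  rw [Matrix.mem_unitaryGroup_iff]
  ext i j
  fin_cases i <;> fin_cases j <;> simp [sigmaX, star_eq_conjTranspose, mul_apply]

lemma exists_unitary_two_mul_re_conj_eq {ρ : Matrix (Fin 2) (Fin 2) ℂ} (hρ : ρ.IsHermitian)
    (htr : ρ.trace = 1) :
    ∃ U ∈ unitaryGroup (Fin 2) ℂ, 2 * ((U * ρ * Uᴴ) 0 0).re = 1 - √(2 * purity ρ - 1) := by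
  set V := star hρ.eigenvectorUnitary
  set e := hρ.eigenvalues
  have hdiag : (V : Matrix (Fin 2) (Fin 2) ℂ) * ρ * (V : Matrix (Fin 2) (Fin 2) ℂ)ᴴ =
      diagonal (ofReal ∘ e) :=
    hρ.conjStarAlgAut_star_eigenvectorUnitary
  have hsum : e 0 + e 1 = 1 := by
    have := trace_unitary_conj V.2 ρ
    rw [hdiag, htr, trace_fin_two] at this
    simpa using congrArg re this
  have hpur : 2 * purity ρ - 1 = (e 0 - e 1) ^ 2 := by
    rw [← purity_unitary_conj V.2, hdiag]
    simp [purity, Fin.sum_univ_two, ← ofReal_mul]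
    linear_combination (e 0 + e 1 + 1) * hsum
  rw [hpur, Real.sqrt_sq_eq_abs]
  rcases le_total (e 0) (e 1) with h | h
  · refine ⟨V, V.2, ?_⟩
    rw [hdiag, abs_of_nonpos (by linarith)]
    simp
    linarith
  · have hswap : (sigmaX * V) * ρ * (sigmaX * V : Matrix (Fin 2) (Fin 2) ℂ)ᴴ =
        sigmaX * diagonal (ofReal ∘ e) * sigmaXᴴ := by
      rw [← hdiag]
      simp only [conjTranspose_mul, Matrix.mul_assoc]
    refine ⟨sigmaX * V, Submonoid.mul_mem _ sigmaX_mem_unitaryGroup V.2, ?_⟩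
    rw [hswap, abs_of_nonneg (by linarith)]
    simp [sigmaX, mul_apply, Fin.sum_univ_two, vecMul, dotProduct]
    linarith

lemma energy_qubitH (ω₀ : ℝ) (M : Matrix (Fin 2) (Fin 2) ℂ) :
    energy (qubitH ω₀) M = ω₀ * (M 0 0).re := by
  simp [energy, qubitH, sigmaZ, trace_fin_two, mul_apply, Fin.sum_univ_two]

theorem passiveEnergy_qubitH {ω₀ : ℝ} (hω : 0 ≤ ω₀) {ρ : Matrix (Fin 2) (Fin 2) ℂ}
    (hρ : ρ.IsHermitian) (htr : ρ.trace = 1) :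
    passiveEnergy (qubitH ω₀) ρ = ω₀ / 2 * (1 - √(2 * purity ρ - 1)) := by
  refine IsLeast.csInf_eq ⟨?_, ?_⟩
  · obtain ⟨U, hU, hmin⟩ := exists_unitary_two_mul_re_conj_eq hρ htr
    exact ⟨U, hU, by rw [energy_qubitH, ← hmin]; ring⟩
  · rintro _ ⟨U, hU, rfl⟩
    have h := one_sub_sqrt_le_two_mul_re (isHermitian_mul_mul_conjTranspose U hρ)
      ((trace_unitary_conj hU ρ).trans htr)
    rw [purity_unitary_conj hU] at h
    rw [energy_qubitH]
    nlinarith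

theorem ergotropy_qubitH {ω₀ : ℝ} (hω : 0 ≤ ω₀) {ρ : Matrix (Fin 2) (Fin 2) ℂ}
    (hρ : ρ.IsHermitian) (htr : ρ.trace = 1) :
    ergotropy (qubitH ω₀) ρ = energy (qubitH ω₀) ρ + ω₀ / 2 * (√(2 * purity ρ - 1) - 1) := by
  rw [ergotropy, passiveEnergy_qubitH hω hρ htr]
  ring

noncomputable def blochState (x y z : ℝ) : Matrix (Fin 2) (Fin 2) ℂ :=
  (1 / 2 : ℂ) • (1 + (x : ℂ) • sigmaX + (y : ℂ) • sigmaY + (z : ℂ) • sigmaZ)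

lemma energy_qubitH_blochState (ω₀ x y z : ℝ) :
    energy (qubitH ω₀) (blochState x y z) = ω₀ * (1 + z) / 2 := by
  simp [energy_qubitH, blochState, sigmaX, sigmaY, sigmaZ]
  ring

lemma two_mul_purity_blochState_sub_one (x y z : ℝ) :
    2 * purity (blochState x y z) - 1 = x ^ 2 + y ^ 2 + z ^ 2 := by
  simp [purity, blochState, sigmaX, sigmaY, sigmaZ, trace_fin_two, mul_apply, Fin.sum_univ_two]
  ring

lemma eq_blochState_of_lindblad_eq_zero {α κ : ℝ} (hκ : κ ≠ 0) {ρ : Matrix (Fin 2) (Fin 2) ℂ}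
    (htr : ρ.trace = 1) (hss : lindblad α κ ρ = 0) :
    ρ = blochState 0 (4 * α * κ / (8 * α ^ 2 + κ ^ 2)) (-κ ^ 2 / (8 * α ^ 2 + κ ^ 2)) := by
  have hκ' : (κ : ℂ) ≠ 0 := by exact_mod_cast hκ
  have hD0 : (8 * α ^ 2 + κ ^ 2 : ℂ) ≠ 0 := by
    exact_mod_cast (by positivity : 8 * α ^ 2 + κ ^ 2 ≠ 0)
  have hL01 := congrFun (congrFun hss 0) 1
  have hL10 := congrFun (congrFun hss 1) 0
  have hL11 := congrFun (congrFun hss 1) 1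
  simp only [lindblad, sigmaX, sigmaMinus] at hL01 hL10 hL11
  simp [mul_apply, Fin.sum_univ_two, vecMul, dotProduct] at hL01 hL10 hL11
  rw [trace_fin_two] at htr
  -- The off-diagonal equations give `κ ρ₀₁ = -κ ρ₁₀ = -2iα (ρ₁₁ - ρ₀₀)`; substituting these into
  -- the `(1,1)` equation and using the trace leaves a linear equation for `ρ₀₀`.
  have h00 : (8 * α ^ 2 + κ ^ 2 : ℂ) * ρ 0 0 = 4 * α ^ 2 := by
    linear_combination κ * hL11 - 2 * I * α * hL01 + 2 * I * α * hL10 + 4 * (α : ℂ) ^ 2 * htr +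
      4 * (α : ℂ) ^ 2 * (ρ 0 0 - ρ 1 1) * I_sq
  have h01 : (8 * α ^ 2 + κ ^ 2 : ℂ) * ρ 0 1 = -(I * (2 * α * κ)) := mul_left_cancel₀ hκ' <| by
    linear_combination -2 * (8 * α ^ 2 + κ ^ 2 : ℂ) * hL01 -
      2 * I * α * (8 * α ^ 2 + κ ^ 2 : ℂ) * htr + 4 * I * α * h00
  have h10 : (8 * α ^ 2 + κ ^ 2 : ℂ) * ρ 1 0 = I * (2 * α * κ) := mul_left_cancel₀ hκ' <| by
    linear_combination -2 * (8 * α ^ 2 + κ ^ 2 : ℂ) * hL10 +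
      2 * I * α * (8 * α ^ 2 + κ ^ 2 : ℂ) * htr - 4 * I * α * h00
  rw [blochState]
  push_cast
  -- `field_simp` sees that the denominator is nonzero only once it is an atom.
  set D : ℂ := 8 * α ^ 2 + κ ^ 2 with hD
  ext i j
  fin_cases i <;> fin_cases j <;> simp [sigmaX, sigmaY, sigmaZ] <;> field_simp
  · linear_combination 2 * h00 - hD
  · linear_combination 2 * h01
  · linear_combination 2 * h10
  · linear_combination 2 * D * htr - 2 * h00 + hD

theorem steady_state_ergotropy_general (α κ ω₀ : ℝ) (hκ : 0 < κ) (hω : 0 < ω₀)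
    (ρss : Matrix (Fin 2) (Fin 2) ℂ)
    (hpos : ρss.PosSemidef) (htr : ρss.trace = 1) (hss : lindblad α κ ρss = 0) :
    ergotropy (qubitH ω₀) ρss =
      (ω₀ * κ / 2) * ((Real.sqrt (16 * α ^ 2 + κ ^ 2) - κ) / (8 * α ^ 2 + κ ^ 2)) := by
  obtain rfl := eq_blochState_of_lindblad_eq_zero hκ.ne' htr hss
  have hbloch : (0 : ℝ) ^ 2 + (4 * α * κ / (8 * α ^ 2 + κ ^ 2)) ^ 2 +
      (-κ ^ 2 / (8 * α ^ 2 + κ ^ 2)) ^ 2 = (κ * √(16 * α ^ 2 + κ ^ 2) / (8 * α ^ 2 + κ ^ 2)) ^ 2 := by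
    rw [div_pow (κ * _), mul_pow, Real.sq_sqrt (by positivity)]
    field_simp
    ring
  rw [ergotropy_qubitH hω.le hpos.isHermitian htr, energy_qubitH_blochState,
    two_mul_purity_blochState_sub_one, hbloch, Real.sqrt_sq (by positivity)]
  field_simp
  ring

/-- the steady-state ergotropy of the driven-dissipative qubit equals
`(ω₀κ/2)·(√(16α² + κ²) − κ)/(8α² + κ²)`. -/
theorem steady_state_ergotropy (α κ ω₀ : ℝ) (hα : 0 < α) (hκ : 0 < κ) (hω : 0 < ω₀)
    (ρss : Matrix (Fin 2) (Fin 2) ℂ)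
    (hpos : ρss.PosSemidef) (htr : ρss.trace = 1) (hss : lindblad α κ ρss = 0) :
    ergotropy (qubitH ω₀) ρss =
      (ω₀ * κ / 2) * ((Real.sqrt (16 * α ^ 2 + κ ^ 2) - κ) / (8 * α ^ 2 + κ ^ 2)) :=
  steady_state_ergotropy_general α κ ω₀ hκ hω ρss hpos htr hss
end
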